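/- arXiv:1611.07393 — 3 statements merged into one kernel-verified Lean document; each statement's English description precedes it below -/
import Mathlib

section
/- Let N ∈ ℕ, m ∈ ℕ, and let B_0 = {y ∈ ℝ^m : ‖y‖ ≤ 2B} be a closed ball for some B > 0. Define the bounded consensus set C̃ = {y = (y_1,...,y_N) ∈ (ℝ^m)^N : ∃ ȳ ∈ B_0 such that y_i = ȳ for all i}. Then for any y ∈ (ℝ^m)^N, the Euclidean projection of y onto C̃ is given componentwise by P_{C̃}(y)_i = P_{B_0}( (1/N) ∑_{j=1}^N y_j ) for each i. -/
/-!
The consensus points form the diagonal, and for a constant vector `(c, …, c)` the parallel axis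
identity `∑ ‖yᵢ - c‖² = ∑ ‖yᵢ - ā‖² + N ‖ā - c‖²` (with `ā` the average of the `yᵢ`) reduces the
problem to minimising `‖ā - c‖` over the ball `‖c‖ ≤ 2B`, which the radial projection of `ā` does.
-/

/-- Euclidean projection onto the closed ball of radius `ρ` centered at the origin. -/
noncomputable def projBall {E : Type*} [NormedAddCommGroup E] [NormedSpace ℝ E]
    (ρ : ℝ) (v : E) : E :=
  if ‖v‖ ≤ ρ then v else (ρ / ‖v‖) • v

section projBall

variable {E : Type*} [NormedAddCommGroup E] [NormedSpace ℝ E] {ρ : ℝ}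

lemma projBall_norm_le (hρ : 0 ≤ ρ) (v : E) : ‖projBall ρ v‖ ≤ ρ := by
  unfold projBall
  split_ifs with h
  · exact h
  · have hv : 0 < ‖v‖ := hρ.trans_lt (not_le.mp h)
    rw [norm_smul, Real.norm_of_nonneg (div_nonneg hρ hv.le), div_mul_cancel₀ _ hv.ne']

lemma norm_sub_projBall_le (v : E) {w : E} (hw : ‖w‖ ≤ ρ) :
    ‖v - projBall ρ v‖ ≤ ‖v - w‖ := by
  unfold projBall
  split_ifs with h
  · simp
  · have hρv : ρ < ‖v‖ := not_le.mp h
    have hv : 0 < ‖v‖ := (norm_nonneg w).trans_lt (hw.trans_lt hρv)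
    have hscale : ρ / ‖v‖ ≤ 1 := (div_le_one hv).mpr hρv.le
    calc ‖v - (ρ / ‖v‖) • v‖ = ‖v‖ - ρ := by
          rw [show v - (ρ / ‖v‖) • v = (1 - ρ / ‖v‖) • v by rw [sub_smul, one_smul], norm_smul,
            Real.norm_of_nonneg (by linarith), sub_mul, one_mul, div_mul_cancel₀ _ hv.ne']
      _ ≤ ‖v‖ - ‖w‖ := by linarith
      _ ≤ ‖v - w‖ := norm_sub_norm_le v w

end projBall

section average

variable {ι E : Type*} [Fintype ι] [NormedAddCommGroup E] [InnerProductSpace ℝ E]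

lemma sum_sub_average_eq_zero (x : ι → E) :
    ∑ i, (x i - (Fintype.card ι : ℝ)⁻¹ • ∑ j, x j) = 0 := by
  rcases (Fintype.card ι).eq_zero_or_pos with hι | hι
  · have : IsEmpty ι := Fintype.card_eq_zero_iff.mp hι
    exact Fintype.sum_empty _
  · rw [Finset.sum_sub_distrib, Finset.sum_const, Finset.card_univ, ← Nat.cast_smul_eq_nsmul ℝ,
      smul_inv_smul₀ (by positivity), sub_self]

lemma sum_norm_sub_sq_eq (x : ι → E) (c : E) :
    ∑ i, ‖x i - c‖ ^ 2 = ∑ i, ‖x i - (Fintype.card ι : ℝ)⁻¹ • ∑ j, x j‖ ^ 2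
      + Fintype.card ι * ‖(Fintype.card ι : ℝ)⁻¹ • ∑ j, x j - c‖ ^ 2 := by
  set a := (Fintype.card ι : ℝ)⁻¹ • ∑ j, x j
  have hcentered : ∑ i, (x i - a) = 0 := sum_sub_average_eq_zero x
  have expand (i : ι) :
      ‖x i - c‖ ^ 2 = ‖x i - a‖ ^ 2 + 2 * inner ℝ (x i - a) (a - c) + ‖a - c‖ ^ 2 := by
    rw [← norm_add_sq_real, sub_add_sub_cancel]
  simp_rw [expand, Finset.sum_add_distrib, ← Finset.mul_sum, ← sum_inner, hcentered,
    inner_zero_left, mul_zero, add_zero, Finset.sum_const, Finset.card_univ, nsmul_eq_mul]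

lemma sum_norm_sub_sq_le_of_norm_average_sub_le (x : ι → E) {c c' : E}
    (h : ‖(Fintype.card ι : ℝ)⁻¹ • ∑ j, x j - c‖ ≤ ‖(Fintype.card ι : ℝ)⁻¹ • ∑ j, x j - c'‖) :
    ∑ i, ‖x i - c‖ ^ 2 ≤ ∑ i, ‖x i - c'‖ ^ 2 := by
  rw [sum_norm_sub_sq_eq x c, sum_norm_sub_sq_eq x c']
  gcongr

end average

theorem stmt5_general {m N : ℕ} (B : ℝ) (hB : 0 < B)
    (Ctil : Set (PiLp 2 (fun _ : Fin N => EuclideanSpace ℝ (Fin m))))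
    (hCtil : Ctil = {v | ∃ ybar : EuclideanSpace ℝ (Fin m),
        ‖ybar‖ ≤ 2 * B ∧ ∀ i, v i = ybar})
    (y z : PiLp 2 (fun _ : Fin N => EuclideanSpace ℝ (Fin m)))
    (hz : ∀ i, z i = projBall (2 * B) ((N : ℝ)⁻¹ • ∑ j, y j)) :
    z ∈ Ctil ∧ ∀ u ∈ Ctil, ‖y - z‖ ≤ ‖y - u‖ := by
  subst hCtil
  refine ⟨⟨_, projBall_norm_le (by positivity) _, hz⟩, ?_⟩
  rintro u ⟨c, hc, hu⟩
  have hsum := sum_norm_sub_sq_le_of_norm_average_sub_le (fun i => y i)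
    (c := projBall (2 * B) ((N : ℝ)⁻¹ • ∑ j, y j)) (c' := c)
  simp only [Fintype.card_fin] at hsum
  rw [PiLp.norm_eq_of_L2, PiLp.norm_eq_of_L2]
  gcongr 1
  simpa only [PiLp.sub_apply, hz, hu] using hsum (norm_sub_projBall_le _ hc)

/-- the Euclidean projection of `y = (y_1,…,y_N)` onto the bounded
consensus set `C̃ = {(ȳ,…,ȳ) : ‖ȳ‖ ≤ 2B}` is given componentwise by the projection
of the average `(1/N) ∑ⱼ yⱼ` onto the ball `B₀` of radius `2B`. -/
theorem stmt5 {m N : ℕ} (hN : 0 < N) (B : ℝ) (hB : 0 < B)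
    (Ctil : Set (PiLp 2 (fun _ : Fin N => EuclideanSpace ℝ (Fin m))))
    (hCtil : Ctil = {v | ∃ ybar : EuclideanSpace ℝ (Fin m),
        ‖ybar‖ ≤ 2 * B ∧ ∀ i, v i = ybar})
    (y z : PiLp 2 (fun _ : Fin N => EuclideanSpace ℝ (Fin m)))
    (hz : ∀ i, z i = projBall (2 * B) ((N : ℝ)⁻¹ • ∑ j, y j)) :
    z ∈ Ctil ∧ ∀ u ∈ Ctil, ‖y - z‖ ≤ ‖y - u‖ :=
  stmt5_general B hB Ctil hCtil y z hz
end

section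
/- Let τ_i, κ_i, γ > 0 and L_i ≥ 0 for i = 1,...,N, and R_i ∈ ℝ^{m×n_i}. Suppose τ_i < 1/L_i, κ_i < 1/γ, and (1/τ_i − L_i)(1/κ_i − γ) > ‖R_i‖² for all i, where ‖R_i‖ is the spectral norm. Then the symmetric block matrix Q̄ = [[D, −Tᵀ],[−T, D_κ]] is positive definite, where D = diag(D̄_τ, D_γ), D̄_τ = diag((1/τ_i − L_i) I_{n_i}), D_γ = (1/γ) I_{mN}, D_κ = diag((1/κ_i) I_m), and T = [R, −I_{mN}] with R = diag(R_1,...,R_N). If the strict inequality is relaxed to ≥ for some i, then Q̄ is positive semidefinite. -/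
/-!
The quadratic form of `Q̄` is a sum of one form per block `i`. Bounding `⟪Rᵢξ - w, y⟫` by
`(‖Rᵢ‖‖ξ‖ + ‖w‖)‖y‖` reduces each block to a real quadratic form in `(x, W, z) = (‖ξ‖, ‖w‖, ‖y‖)`, and with
`a = 1/τᵢ - Lᵢ`, `c = 1/κᵢ`, `r = ‖Rᵢ‖`, `g = γ` this form times `a g` is
`g (a x - r z)² + g (a (c - g) - r²) z² + a (W - g z)²`,
a sum of squares with nonnegative (positive, in the strict case) coefficients.
-/

open Finset

lemma mul_mul_quadratic_eq (a g c r x W z : ℝ) (hg : g ≠ 0) :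
    a * g * (a * x ^ 2 + 1 / g * W ^ 2 + c * z ^ 2 - 2 * ((r * x + W) * z))
      = g * (a * x - r * z) ^ 2 + g * (a * (c - g) - r ^ 2) * z ^ 2 + a * (W - g * z) ^ 2 := by
  field_simp
  ring

lemma quadratic_nonneg_of_sq_le {a g c r : ℝ} (ha : 0 < a) (hg : 0 < g)
    (hr : r ^ 2 ≤ a * (c - g)) (x W z : ℝ) :
    0 ≤ a * x ^ 2 + 1 / g * W ^ 2 + c * z ^ 2 - 2 * ((r * x + W) * z) := by
  have hsq : 0 ≤ g * (a * x - r * z) ^ 2 + g * (a * (c - g) - r ^ 2) * z ^ 2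
      + a * (W - g * z) ^ 2 := by
    have := sub_nonneg.2 hr
    positivity
  rw [← mul_mul_quadratic_eq a g c r x W z hg.ne'] at hsq
  exact nonneg_of_mul_nonneg_right hsq (by positivity)

lemma quadratic_pos_of_sq_lt {a g c r : ℝ} (ha : 0 < a) (hg : 0 < g)
    (hr : r ^ 2 < a * (c - g)) {x W z : ℝ} (hne : x ≠ 0 ∨ W ≠ 0 ∨ z ≠ 0) :
    0 < a * x ^ 2 + 1 / g * W ^ 2 + c * z ^ 2 - 2 * ((r * x + W) * z) := by
  refine (quadratic_nonneg_of_sq_le ha hg hr.le x W z).lt_of_ne fun hzero => ?_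
  have hsum := mul_mul_quadratic_eq a g c r x W z hg.ne'
  rw [← hzero, mul_zero] at hsum
  have hgap := sub_pos.2 hr
  have h₁ : 0 ≤ g * (a * x - r * z) ^ 2 := by positivity
  have h₂ : 0 ≤ g * (a * (c - g) - r ^ 2) * z ^ 2 := by positivity
  have h₃ : 0 ≤ a * (W - g * z) ^ 2 := by positivity
  have hz : z = 0 := by
    have : g * (a * (c - g) - r ^ 2) * z ^ 2 = 0 := by linarith
    simpa [hg.ne', hgap.ne'] using this
  have hx : x = 0 := by
    have : g * (a * x - r * z) ^ 2 = 0 := by linarith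
    simpa [hz, hg.ne', ha.ne'] using this
  have hW : W = 0 := by
    have : a * (W - g * z) ^ 2 = 0 := by linarith
    simpa [hz, sub_eq_zero, ha.ne'] using this
  simp [hx, hW, hz] at hne

section Block

variable {E F : Type*} [NormedAddCommGroup E] [NormedSpace ℝ E]
  [NormedAddCommGroup F] [InnerProductSpace ℝ F]

/-- One diagonal block of the quadratic form of `Q̄`, in the variables `(ξ, w, y)`. -/
noncomputable def blockForm (a g c : ℝ) (A : E →L[ℝ] F) (ξ : E) (w y : F) : ℝ :=
  a * ‖ξ‖ ^ 2 + 1 / g * ‖w‖ ^ 2 + c * ‖y‖ ^ 2 - 2 * inner ℝ (A ξ - w) y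

lemma inner_apply_sub_le (A : E →L[ℝ] F) (ξ : E) (w y : F) :
    inner ℝ (A ξ - w) y ≤ (‖A‖ * ‖ξ‖ + ‖w‖) * ‖y‖ :=
  calc inner ℝ (A ξ - w) y ≤ ‖A ξ - w‖ * ‖y‖ := real_inner_le_norm _ _
    _ ≤ (‖A‖ * ‖ξ‖ + ‖w‖) * ‖y‖ := by
      gcongr
      exact (norm_sub_le _ _).trans (by gcongr; exact A.le_opNorm ξ)

lemma quadratic_le_blockForm (a g c : ℝ) (A : E →L[ℝ] F) (ξ : E) (w y : F) :
    a * ‖ξ‖ ^ 2 + 1 / g * ‖w‖ ^ 2 + c * ‖y‖ ^ 2 - 2 * ((‖A‖ * ‖ξ‖ + ‖w‖) * ‖y‖)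
      ≤ blockForm a g c A ξ w y := by
  have := inner_apply_sub_le A ξ w y
  unfold blockForm
  linarith

lemma blockForm_nonneg {a g c : ℝ} (ha : 0 < a) (hg : 0 < g) {A : E →L[ℝ] F}
    (hA : ‖A‖ ^ 2 ≤ a * (c - g)) (ξ : E) (w y : F) : 0 ≤ blockForm a g c A ξ w y :=
  (quadratic_nonneg_of_sq_le ha hg hA _ _ _).trans (quadratic_le_blockForm a g c A ξ w y)

lemma blockForm_pos {a g c : ℝ} (ha : 0 < a) (hg : 0 < g) {A : E →L[ℝ] F}
    (hA : ‖A‖ ^ 2 < a * (c - g)) {ξ : E} {w y : F} (hne : ξ ≠ 0 ∨ w ≠ 0 ∨ y ≠ 0) :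
    0 < blockForm a g c A ξ w y := by
  refine (quadratic_pos_of_sq_lt ha hg hA ?_).trans_le (quadratic_le_blockForm a g c A ξ w y)
  simpa only [norm_ne_zero_iff] using hne

end Block

lemma exists_ne_zero_of_not_all_zero {ι : Type*} {α β γ : ι → Type*} [∀ i, Zero (α i)]
    [∀ i, Zero (β i)] [∀ i, Zero (γ i)] {f : ∀ i, α i} {g : ∀ i, β i} {h : ∀ i, γ i}
    (hne : ¬ (f = 0 ∧ g = 0 ∧ h = 0)) : ∃ i, f i ≠ 0 ∨ g i ≠ 0 ∨ h i ≠ 0 := by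
  by_contra! hall
  exact hne ⟨funext fun i => (hall i).1, funext fun i => (hall i).2.1,
    funext fun i => (hall i).2.2⟩

theorem stmt9_general (N m : ℕ) (n : Fin N → ℕ) (τ κ L : Fin N → ℝ) (γ : ℝ)
    (hτ : ∀ i, 0 < τ i) (hγ : 0 < γ)
    (hτL : ∀ i, τ i * L i < 1)
    (R : ∀ i, EuclideanSpace ℝ (Fin (n i)) →L[ℝ] EuclideanSpace ℝ (Fin m)) :
    ((∀ i, ‖R i‖ ^ 2 < (1 / τ i - L i) * (1 / κ i - γ)) →
      ∀ (ξ : ∀ i, EuclideanSpace ℝ (Fin (n i)))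
        (w y : Fin N → EuclideanSpace ℝ (Fin m)),
        ¬ (ξ = 0 ∧ w = 0 ∧ y = 0) →
        0 < ∑ i, (1 / τ i - L i) * ‖ξ i‖ ^ 2 + (1 / γ) * ∑ i, ‖w i‖ ^ 2
            + ∑ i, (1 / κ i) * ‖y i‖ ^ 2
            - 2 * ∑ i, (inner ℝ (R i (ξ i) - w i) (y i) : ℝ)) ∧
    ((∀ i, ‖R i‖ ^ 2 ≤ (1 / τ i - L i) * (1 / κ i - γ)) →
      ∀ (ξ : ∀ i, EuclideanSpace ℝ (Fin (n i)))
        (w y : Fin N → EuclideanSpace ℝ (Fin m)),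
        0 ≤ ∑ i, (1 / τ i - L i) * ‖ξ i‖ ^ 2 + (1 / γ) * ∑ i, ‖w i‖ ^ 2
            + ∑ i, (1 / κ i) * ‖y i‖ ^ 2
            - 2 * ∑ i, (inner ℝ (R i (ξ i) - w i) (y i) : ℝ)) := by
  have ha (i : Fin N) : 0 < 1 / τ i - L i := by
    rw [sub_pos, lt_div_iff₀ (hτ i)]
    linarith [hτL i]
  have hsplit (ξ : ∀ i, EuclideanSpace ℝ (Fin (n i))) (w y : Fin N → EuclideanSpace ℝ (Fin m)) :
      ∑ i, (1 / τ i - L i) * ‖ξ i‖ ^ 2 + (1 / γ) * ∑ i, ‖w i‖ ^ 2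
          + ∑ i, (1 / κ i) * ‖y i‖ ^ 2 - 2 * ∑ i, (inner ℝ (R i (ξ i) - w i) (y i) : ℝ)
        = ∑ i, blockForm (1 / τ i - L i) γ (1 / κ i) (R i) (ξ i) (w i) (y i) := by
    simp only [blockForm, mul_sum, ← sum_add_distrib, ← sum_sub_distrib]
  refine ⟨fun hR ξ w y hne => ?_, fun hR ξ w y => ?_⟩
  · obtain ⟨i₀, hi₀⟩ := exists_ne_zero_of_not_all_zero hne
    rw [hsplit]
    exact sum_pos' (fun i _ => blockForm_nonneg (ha i) hγ (hR i).le _ _ _)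
      ⟨i₀, mem_univ _, blockForm_pos (ha i₀) hγ (hR i₀) hi₀⟩
  · rw [hsplit]
    exact sum_nonneg fun i _ => blockForm_nonneg (ha i) hγ (hR i) _ _ _

/-- positive (semi)definiteness of the matrix
`Q̄ = [[D, −Tᵀ],[−T, D_κ]]` with `D = diag(D̄_τ, D_γ)`, `D̄_τ = diag((1/τᵢ−Lᵢ)I)`,
`D_γ = (1/γ)I`, `D_κ = diag((1/κᵢ)I)`, `T = [R, −I]`, `R = diag(R₁,…,R_N)`,
expressed via the quadratic form
`z ↦ ∑ᵢ(1/τᵢ−Lᵢ)‖ξᵢ‖² + (1/γ)∑ᵢ‖wᵢ‖² + ∑ᵢ(1/κᵢ)‖yᵢ‖² − 2∑ᵢ⟨Rᵢξᵢ − wᵢ, yᵢ⟩`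
for `z = (ξ, w, y)`: strict step-size inequalities give positive definiteness,
and the relaxed inequalities give positive semidefiniteness. -/
theorem stmt9 (N m : ℕ) (n : Fin N → ℕ) (τ κ L : Fin N → ℝ) (γ : ℝ)
    (hτ : ∀ i, 0 < τ i) (hκ : ∀ i, 0 < κ i) (hγ : 0 < γ) (hL : ∀ i, 0 ≤ L i)
    (hτL : ∀ i, τ i * L i < 1) (hκγ : ∀ i, κ i * γ < 1)
    (R : ∀ i, EuclideanSpace ℝ (Fin (n i)) →L[ℝ] EuclideanSpace ℝ (Fin m)) :
    ((∀ i, ‖R i‖ ^ 2 < (1 / τ i - L i) * (1 / κ i - γ)) →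
      ∀ (ξ : ∀ i, EuclideanSpace ℝ (Fin (n i)))
        (w y : Fin N → EuclideanSpace ℝ (Fin m)),
        ¬ (ξ = 0 ∧ w = 0 ∧ y = 0) →
        0 < ∑ i, (1 / τ i - L i) * ‖ξ i‖ ^ 2 + (1 / γ) * ∑ i, ‖w i‖ ^ 2
            + ∑ i, (1 / κ i) * ‖y i‖ ^ 2
            - 2 * ∑ i, (inner ℝ (R i (ξ i) - w i) (y i) : ℝ)) ∧
    ((∀ i, ‖R i‖ ^ 2 ≤ (1 / τ i - L i) * (1 / κ i - γ)) →
      ∀ (ξ : ∀ i, EuclideanSpace ℝ (Fin (n i)))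
        (w y : Fin N → EuclideanSpace ℝ (Fin m)),
        0 ≤ ∑ i, (1 / τ i - L i) * ‖ξ i‖ ^ 2 + (1 / γ) * ∑ i, ‖w i‖ ^ 2
            + ∑ i, (1 / κ i) * ‖y i‖ ^ 2
            - 2 * ∑ i, (inner ℝ (R i (ξ i) - w i) (y i) : ℝ)) :=
  stmt9_general N m n τ κ L γ hτ hγ hτL R
end

section
/- Let φ: ℝ^n → ℝ ∪ {+∞}, g: ℝ^n → ℝ^m, K ⊆ ℝ^m a cone with nonempty interior, and define the dual function q(y) = inf_ξ φ(ξ) + yᵀ g(ξ) for y ∈ K° and q(y) = −∞ otherwise. Suppose ξ̄ satisfies g(ξ̄) ∈ int(K) and φ(ξ̄) < ∞. Let r > 0 be such that g(ξ̄) + r u ∈ K for all ‖u‖ ≤ 1. Then for any ȳ with q(ȳ) > −∞ and any y ∈ K° with q(y) ≥ q(ȳ), we have ‖y‖ ≤ (φ(ξ̄) − q(ȳ)) / r. -/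
/-! Testing `y ∈ K°` against the point `g ξ̄ + r • (y / ‖y‖)` of `K` gives `⟪y, g ξ̄⟫ ≤ -r‖y‖`,
so `q ȳ ≤ q y ≤ φ ξ̄ + ⟪y, g ξ̄⟫ ≤ φ ξ̄ - r‖y‖`. -/

open scoped RealInnerProductSpace

lemma inner_add_mul_norm_nonpos_of_ball_subset {E : Type*} [NormedAddCommGroup E]
    [InnerProductSpace ℝ E] {K : Set E} {x y : E} {r : ℝ}
    (hball : ∀ u : E, ‖u‖ ≤ 1 → x + r • u ∈ K) (hy : ∀ w ∈ K, ⟪y, w⟫ ≤ 0) :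
    ⟪y, x⟫ + r * ‖y‖ ≤ 0 := by
  rcases eq_or_ne y 0 with rfl | hy0
  · simp
  have hmem := hy _ (hball (‖y‖⁻¹ • y) (norm_smul_inv_norm hy0).le)
  have hny : ‖y‖ ≠ 0 := norm_ne_zero_iff.2 hy0
  rw [inner_add_right, real_inner_smul_right, real_inner_smul_right,
    real_inner_self_eq_norm_mul_norm, inv_mul_cancel_left₀ hny] at hmem
  exact hmem

lemma EReal.coe_le_sub_of_le_add_coe_neg {a b : EReal} {c : ℝ} (ha : a ≠ ⊤) (hb : b ≠ ⊥)
    (h : b ≤ a + ((-c : ℝ) : EReal)) : (c : EReal) ≤ a - b := by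
  have ha' : a ≠ ⊥ := by
    rintro rfl
    exact hb (le_bot_iff.1 (by simpa using h))
  have hb' : b ≠ ⊤ := ne_top_of_le_ne_top (EReal.add_ne_top ha (EReal.coe_ne_top _)) h
  lift a to ℝ using ⟨ha, ha'⟩
  lift b to ℝ using ⟨hb', hb⟩
  norm_cast at h ⊢
  linarith

theorem stmt12_general {n m : ℕ}
    (φ : EuclideanSpace ℝ (Fin n) → EReal)
    (g : EuclideanSpace ℝ (Fin n) → EuclideanSpace ℝ (Fin m))
    (K : Set (EuclideanSpace ℝ (Fin m)))
    (q : EuclideanSpace ℝ (Fin m) → EReal)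
    (hq : ∀ y, (∀ w ∈ K, (inner ℝ y w : ℝ) ≤ 0) →
        q y = ⨅ ξ, (φ ξ + (((inner ℝ y (g ξ) : ℝ)) : EReal)))
    (ξbar : EuclideanSpace ℝ (Fin n)) (hφfin : φ ξbar ≠ ⊤)
    (r : ℝ)
    (hball : ∀ u : EuclideanSpace ℝ (Fin m), ‖u‖ ≤ 1 → g ξbar + r • u ∈ K)
    (ybar y : EuclideanSpace ℝ (Fin m))
    (hqbar : q ybar ≠ ⊥)
    (hy : ∀ w ∈ K, (inner ℝ y w : ℝ) ≤ 0) (hge : q ybar ≤ q y) :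
    ((r * ‖y‖ : ℝ) : EReal) ≤ φ ξbar - q ybar := by
  have hslater := inner_add_mul_norm_nonpos_of_ball_subset hball hy
  refine EReal.coe_le_sub_of_le_add_coe_neg hφfin hqbar ?_
  calc q ybar ≤ q y := hge
    _ ≤ φ ξbar + ((⟪y, g ξbar⟫ : ℝ) : EReal) := (hq y hy).symm ▸ iInf_le _ ξbar
    _ ≤ φ ξbar + ((-(r * ‖y‖) : ℝ) : EReal) := by gcongr; linarith

/-- dual boundedness from a Slater point: with
`q(y) = inf_ξ (φ(ξ) + ⟨y, g(ξ)⟩)` on the polar cone `K°`, a Slater point `ξ̄` with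
`g(ξ̄) + r·u ∈ K` for all `‖u‖ ≤ 1` (`r > 0`, `φ(ξ̄) < ∞`) yields, for any
`ȳ ∈ K°` with `q(ȳ) > −∞` and any `y ∈ K°` with `q(y) ≥ q(ȳ)`, the bound
`‖y‖ ≤ (φ(ξ̄) − q(ȳ))/r`, stated here as `r‖y‖ ≤ φ(ξ̄) − q(ȳ)` in `EReal`. -/
theorem stmt12 {n m : ℕ}
    (φ : EuclideanSpace ℝ (Fin n) → EReal) (hφbot : ∀ ξ, φ ξ ≠ ⊥)
    (g : EuclideanSpace ℝ (Fin n) → EuclideanSpace ℝ (Fin m))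
    (K : Set (EuclideanSpace ℝ (Fin m)))
    (hcone : ∀ c : ℝ, 0 < c → ∀ x ∈ K, c • x ∈ K)
    (q : EuclideanSpace ℝ (Fin m) → EReal)
    (hq : ∀ y, (∀ w ∈ K, (inner ℝ y w : ℝ) ≤ 0) →
        q y = ⨅ ξ, (φ ξ + (((inner ℝ y (g ξ) : ℝ)) : EReal)))
    (ξbar : EuclideanSpace ℝ (Fin n)) (hφfin : φ ξbar ≠ ⊤)
    (r : ℝ) (hr : 0 < r)
    (hball : ∀ u : EuclideanSpace ℝ (Fin m), ‖u‖ ≤ 1 → g ξbar + r • u ∈ K)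
    (ybar y : EuclideanSpace ℝ (Fin m))
    (hybar : ∀ w ∈ K, (inner ℝ ybar w : ℝ) ≤ 0) (hqbar : q ybar ≠ ⊥)
    (hy : ∀ w ∈ K, (inner ℝ y w : ℝ) ≤ 0) (hge : q ybar ≤ q y) :
    ((r * ‖y‖ : ℝ) : EReal) ≤ φ ξbar - q ybar :=
  stmt12_general φ g K q hq ξbar hφfin r hball ybar y hqbar hy hge
end
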